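/- A 4-regular matchstick graph M with τ(M) = 2 contains no vertex of degree 1, and a 4-regular matchstick graph M with τ(M) = 4 contains at most one vertex of degree 1. -/
import Mathlib


open scoped Classical

noncomputable section

/-- The union of all closed edge segments of a straight-line drawing `f` of `G`. -/
def segUnion {V : Type} (G : SimpleGraph V) (f : V → EuclideanSpace ℝ (Fin 2)) :
    Set (EuclideanSpace ℝ (Fin 2)) :=
  ⋃ (p : V × V) (_ : G.Adj p.1 p.2), segment ℝ (f p.1) (f p.2)

/-- A vertex is *outer* if its image lies in the closure of the unbounded
connected component of the complement of the union of the edge segments. -/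
def IsOuter {V : Type} (G : SimpleGraph V) (f : V → EuclideanSpace ℝ (Fin 2)) (v : V) : Prop :=
  f v ∈ closure {x : EuclideanSpace ℝ (Fin 2) | x ∉ segUnion G f ∧
    ¬ Bornology.IsBounded (connectedComponentIn (segUnion G f)ᶜ x)}

/-- A `4`-regular matchstick graph: a finite connected simple graph together with a
matchstick embedding in the plane (unit-length, non-crossing straight edges) such that
every inner vertex has degree exactly `4` and every outer vertex has degree at most `4`. -/
structure Matchstick4 : Type 1 where
  V : Type
  [fin : Fintype V]
  G : SimpleGraph V
  conn : G.Connected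
  f : V → EuclideanSpace ℝ (Fin 2)
  inj : Function.Injective f
  unit : ∀ u v : V, G.Adj u v → dist (f u) (f v) = 1
  noncross : ∀ a b c d : V, G.Adj a b → G.Adj c d →
    ∀ x : EuclideanSpace ℝ (Fin 2), x ∈ segment ℝ (f a) (f b) → x ∈ segment ℝ (f c) (f d) →
      ∃ w : V, (w = a ∨ w = b) ∧ (w = c ∨ w = d) ∧ x = f w
  innerDeg : ∀ v : V, ¬ IsOuter G f v → (G.neighborSet v).ncard = 4
  outerDeg : ∀ v : V, IsOuter G f v → (G.neighborSet v).ncard ≤ 4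

attribute [instance] Matchstick4.fin

namespace Matchstick4

/-- number of vertices -/
def n (M : Matchstick4) : ℕ := Fintype.card M.V

/-- degree of a vertex -/
def deg (M : Matchstick4) (v : M.V) : ℕ := (M.G.neighborSet v).ncard

/-- the set of outer vertices -/
def outer (M : Matchstick4) : Set M.V := {v | IsOuter M.G M.f v}

/-- the set of inner vertices -/
def innerVerts (M : Matchstick4) : Set M.V := {v | ¬ IsOuter M.G M.f v}

/-- number of outer vertices -/
def k (M : Matchstick4) : ℕ := M.outer.ncard

/-- `τ(M) = Σ_{v outer} (4 - deg v)` -/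
def tau (M : Matchstick4) : ℤ :=
  ∑ v : M.V, if IsOuter M.G M.f v then (4 - (M.deg v : ℤ)) else 0

/-- `M` is `2`-connected: at least `3` vertices and deleting any single vertex
leaves a connected graph. -/
def TwoConnected (M : Matchstick4) : Prop :=
  3 ≤ M.n ∧ ∀ v : M.V, (M.G.induce {w : M.V | w ≠ v}).Connected

end Matchstick4

lemma term_nonneg (M : Matchstick4) (v : M.V) :
    0 ≤ (if IsOuter M.G M.f v then (4 - (M.deg v : ℤ)) else 0) := by
  split_ifs with h
  · have h1 := M.outerDeg v h
    have h2 : (M.deg v : ℤ) ≤ 4 := by exact_mod_cast h1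
    omega
  · exact le_refl 0

lemma deg1_outer (M : Matchstick4) (v : M.V) (hv : M.deg v = 1) :
    IsOuter M.G M.f v := by
  by_contra h
  have := M.innerDeg v h
  rw [Matchstick4.deg] at hv
  omega

lemma deg1_term (M : Matchstick4) (v : M.V) (hv : M.deg v = 1) :
    (if IsOuter M.G M.f v then (4 - (M.deg v : ℤ)) else 0) = 3 := by
  simp [deg1_outer M v hv, hv]

/-- With τ = 2 there is no vertex of degree 1; with τ = 4 there is
at most one vertex of degree 1. -/
theorem stmt8 :
    (∀ M : Matchstick4, M.tau = 2 → ∀ v : M.V, M.deg v ≠ 1) ∧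
    (∀ M : Matchstick4, M.tau = 4 → {v : M.V | M.deg v = 1}.ncard ≤ 1) := by
  constructor
  · intro M htau v hv
    have h1 : (3:ℤ) ≤ M.tau := by
      have := Finset.single_le_sum (f := fun v =>
        (if IsOuter M.G M.f v then (4 - (M.deg v : ℤ)) else 0))
        (fun i _ => term_nonneg M i) (Finset.mem_univ v)
      rw [deg1_term M v hv] at this
      exact this
    omega
  · intro M htau
    rw [Set.ncard_le_one_iff]
    intro a b ha hb
    by_contra hne
    have h6 : (6:ℤ) ≤ M.tau := by
      have hsub : ({a, b} : Finset M.V) ⊆ Finset.univ := Finset.subset_univ _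
      have hsum := Finset.sum_le_sum_of_subset_of_nonneg hsub
        (f := fun v => (if IsOuter M.G M.f v then (4 - (M.deg v : ℤ)) else 0))
        (fun i _ _ => term_nonneg M i)
      have hpair : ∑ v ∈ ({a, b} : Finset M.V),
          (if IsOuter M.G M.f v then (4 - (M.deg v : ℤ)) else 0) = 6 := by
        rw [Finset.sum_pair hne, deg1_term M a ha, deg1_term M b hb]; norm_num
      rw [hpair] at hsum
      exact hsum
    omega
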